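/- For an integer q ≥ 2, setting t = 1 in the identity of Theorem (compat) shows that the ordinary q-binomial coefficient [n choose k]_q (which for q a prime power counts k-subspaces of F_q^n) equals the cardinality of the set of partitions μ that are q-compatible with some partition λ fitting inside a k × (n-k) rectangle. -/

import Mathlib

/-!
For fixed `λ`, the `μ` that are q-compatible with `λ` form a box with `∏ᵢ q ^ λᵢ = q ^ |λ|`
points. Boxes of distinct `λ` are disjoint: once `λᵢ₊₁` is known, the multiplicity of the
`i`-th part lies in `[S (λᵢ), S (λᵢ + 1))` for the monotone partial sums
`S a = ∑_{λᵢ₊₁ ≤ j < a} q ^ j`, so `λ` is read off from `μ` starting with its last part.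
The count is therefore `∑_{λ ⊆ k × (n - k)} q ^ |λ|`, which satisfies the q-Pascal recurrence
(split on whether the last part of `λ` vanishes) and hence equals the Gaussian binomial.
-/

noncomputable section

/-- `λ_{i+1}` for a partition encoded by `lam : Fin k → ℕ` (with `λ_{k+1} = 0`). -/
def nextPart {k : ℕ} (lam : Fin k → ℕ) (i : Fin k) : ℕ :=
  if h : (i : ℕ) + 1 < k then lam ⟨(i : ℕ) + 1, h⟩ else 0

/-- `δ_i(λ) := Σ_{j=λ_{i+1}}^{λ_i - 1} q^j`. -/
def deltaStat (q : ℕ) {k : ℕ} (lam : Fin k → ℕ) (i : Fin k) : ℕ :=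
  ∑ j ∈ Finset.Ico (nextPart lam i) (lam i), q ^ j

open Finset

def boxPartitions (m k : ℕ) : Finset (Fin k → ℕ) :=
  {f ∈ Fintype.piFinset fun _ => range (m + 1) | Antitone f}

lemma mem_boxPartitions {m k : ℕ} {f : Fin k → ℕ} :
    f ∈ boxPartitions m k ↔ Antitone f ∧ ∀ i, f i ≤ m := by
  simp [boxPartitions, and_comm]

lemma snoc_zero_mem_boxPartitions {m k : ℕ} {f : Fin k → ℕ} (hf : f ∈ boxPartitions m k) :
    Fin.snoc (α := fun _ => ℕ) f 0 ∈ boxPartitions m (k + 1) := by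
  rw [mem_boxPartitions] at hf ⊢
  refine ⟨fun i j hij => ?_, fun i => ?_⟩
  · induction j using Fin.lastCases with
    | last => simp
    | cast j =>
      induction i using Fin.lastCases with
      | last => exact absurd hij (Fin.castSucc_lt_last j).not_ge
      | cast i => simpa using hf.1 (Fin.castSucc_le_castSucc_iff.1 hij)
  · induction i using Fin.lastCases <;> simp [hf.2]

lemma init_mem_boxPartitions {m k : ℕ} {f : Fin (k + 1) → ℕ}
    (hf : f ∈ boxPartitions m (k + 1)) :
    Fin.init f ∈ boxPartitions m k := by
  rw [mem_boxPartitions] at hf ⊢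
  exact ⟨hf.1.comp_monotone Fin.strictMono_castSucc.monotone, fun i => hf.2 _⟩

lemma add_one_mem_boxPartitions {m k : ℕ} {f : Fin k → ℕ} (hf : f ∈ boxPartitions m k) :
    f + 1 ∈ boxPartitions (m + 1) k := by
  rw [mem_boxPartitions] at hf ⊢
  exact ⟨hf.1.add_const 1, fun i => Nat.add_le_add_right (hf.2 i) 1⟩

lemma sub_one_mem_boxPartitions {m k : ℕ} {f : Fin k → ℕ}
    (hf : f ∈ boxPartitions (m + 1) k) :
    f - 1 ∈ boxPartitions m k := by
  rw [mem_boxPartitions] at hf ⊢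
  exact ⟨fun i j hij => Nat.sub_le_sub_right (hf.1 hij) 1, fun i => by simpa using hf.2 i⟩

section GeneratingFunction

variable {R : Type*} [CommSemiring R]

def boxPartitionGF (q : R) (m k : ℕ) : R :=
  ∑ f ∈ boxPartitions m k, q ^ ∑ i, f i

@[simp, norm_cast]
lemma Nat.cast_boxPartitionGF (q m k : ℕ) :
    ((boxPartitionGF q m k : ℕ) : R) = boxPartitionGF (q : R) m k := by
  simp [boxPartitionGF]

lemma boxPartitionGF_zero_right (q : R) (m : ℕ) : boxPartitionGF q m 0 = 1 := by
  simp [boxPartitionGF, boxPartitions, Subsingleton.antitone]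

lemma boxPartitionGF_zero_left (q : R) (k : ℕ) : boxPartitionGF q 0 k = 1 := by
  simp [boxPartitionGF, boxPartitions, filter_singleton, antitone_const]

lemma sum_boxPartitions_filter_last_eq_zero (q : R) (m k : ℕ) :
    ∑ f ∈ boxPartitions m (k + 1) with f (Fin.last k) = 0, q ^ ∑ i, f i =
      boxPartitionGF q m k := by
  symm
  refine sum_nbij' (fun f => Fin.snoc f 0) Fin.init (fun f hf => ?_)
    (fun f hf => init_mem_boxPartitions (mem_filter.1 hf).1) (fun f _ => Fin.init_snoc _ _)
    (fun f hf => ?_) (fun f _ => by simp [Fin.sum_univ_castSucc])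
  · simp [mem_filter, snoc_zero_mem_boxPartitions hf]
  · rw [← (mem_filter.1 hf).2]
    exact Fin.snoc_init_self f

lemma sum_boxPartitions_filter_last_ne_zero (q : R) (m k : ℕ) :
    ∑ f ∈ boxPartitions (m + 1) (k + 1) with ¬f (Fin.last k) = 0, q ^ ∑ i, f i =
      q ^ (k + 1) * boxPartitionGF q m (k + 1) := by
  rw [boxPartitionGF, mul_sum]
  symm
  refine sum_nbij' (· + 1) (· - 1) (fun f hf => ?_)
    (fun f hf => sub_one_mem_boxPartitions (mem_filter.1 hf).1)
    (fun f _ => add_tsub_cancel_right f 1)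
    (fun f hf => ?_) (fun f _ => by simp [sum_add_distrib, pow_add, mul_comm])
  · simp [mem_filter, add_one_mem_boxPartitions hf]
  · obtain ⟨hf, hlast⟩ := mem_filter.1 hf
    funext i
    have := (mem_boxPartitions.1 hf).1 (Fin.le_last i)
    simp only [Pi.add_apply, Pi.sub_apply, Pi.one_apply]
    omega

lemma boxPartitionGF_succ_succ (q : R) (m k : ℕ) :
    boxPartitionGF q (m + 1) (k + 1) =
      boxPartitionGF q (m + 1) k + q ^ (k + 1) * boxPartitionGF q m (k + 1) := by
  rw [boxPartitionGF, ← sum_filter_add_sum_filter_not _ (fun f => f (Fin.last k) = 0),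
    sum_boxPartitions_filter_last_eq_zero, sum_boxPartitions_filter_last_ne_zero]

end GeneratingFunction

theorem boxPartitionGF_mul_prod {R : Type*} [CommRing R] (q : R) (m k : ℕ) :
    boxPartitionGF q m k * ∏ j ∈ range k, (q ^ (j + 1) - 1) =
      ∏ j ∈ range k, (q ^ (m + j + 1) - 1) := by
  induction k generalizing m with
  | zero => simp [boxPartitionGF_zero_right]
  | succ k ihk =>
    induction m with
    | zero => simp [boxPartitionGF_zero_left]
    | succ m ihm =>
      have hshift : ∏ j ∈ range (k + 1), (q ^ (m + j + 1) - 1) =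
          (∏ j ∈ range k, (q ^ (m + 1 + j + 1) - 1)) * (q ^ (m + 1) - 1) := by
        rw [prod_range_succ']
        simp only [add_assoc, add_comm 1, add_zero]
      calc boxPartitionGF q (m + 1) (k + 1) * ∏ j ∈ range (k + 1), (q ^ (j + 1) - 1)
          = boxPartitionGF q (m + 1) k * (∏ j ∈ range k, (q ^ (j + 1) - 1)) * (q ^ (k + 1) - 1) +
              q ^ (k + 1) *
                (boxPartitionGF q m (k + 1) * ∏ j ∈ range (k + 1), (q ^ (j + 1) - 1)) := by
            rw [boxPartitionGF_succ_succ, prod_range_succ]; ring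
        _ = ∏ j ∈ range (k + 1), (q ^ (m + 1 + j + 1) - 1) := by
            rw [ihk, ihm, hshift, prod_range_succ]; ring

theorem boxPartitionGF_eq_prod_div {K : Type*} [Field K] {q : K} (hq₀ : q ≠ 0)
    (hq : ∀ j, 0 < j → q ^ j ≠ 1) (m k : ℕ) :
    boxPartitionGF q m k = ∏ i ∈ range k, ((q ^ (m + k) - q ^ i) / (q ^ k - q ^ i)) := by
  have hD : ∏ j ∈ range k, (q ^ (j + 1) - 1) ≠ 0 :=
    prod_ne_zero_iff.2 fun j _ => sub_ne_zero.2 (hq _ j.succ_pos)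
  rw [eq_div_of_mul_eq hD (boxPartitionGF_mul_prod q m k), ← prod_div_distrib,
    ← prod_range_reflect _ k]
  refine prod_congr rfl fun i hi => ?_
  obtain ⟨l, rfl⟩ : ∃ l, k = i + (l + 1) := ⟨k - i - 1, by have := mem_range.1 hi; omega⟩
  rw [show i + (l + 1) - 1 - i = l by omega, show m + (i + (l + 1)) = i + (m + l + 1) by ring,
    pow_add q i, pow_add q i, ← mul_sub_one, ← mul_sub_one,
    mul_div_mul_left _ _ (pow_ne_zero i hq₀)]

def compatibleBox (q : ℕ) {k : ℕ} (lam : Fin k → ℕ) : Finset (Fin k → ℕ) :=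
  Fintype.piFinset fun i => Ico (deltaStat q lam i) (deltaStat q lam i + q ^ lam i)

section Compatible

variable {q k : ℕ}

lemma mem_compatibleBox {lam f : Fin k → ℕ} :
    f ∈ compatibleBox q lam ↔
      ∀ i, deltaStat q lam i ≤ f i ∧ f i < deltaStat q lam i + q ^ lam i := by
  simp [compatibleBox]

lemma card_compatibleBox (lam : Fin k → ℕ) : #(compatibleBox q lam) = q ^ ∑ i, lam i := by
  simp [compatibleBox, prod_pow_eq_pow_sum]

lemma nextPart_le {lam : Fin k → ℕ} (h : Antitone lam) (i : Fin k) :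
    nextPart lam i ≤ lam i := by
  unfold nextPart
  split_ifs
  · exact h (Fin.mk_le_mk.2 (Nat.le_succ _))
  · exact Nat.zero_le _

lemma eq_of_mem_compatibleBox {lam lam' f : Fin k → ℕ} (h : Antitone lam) (h' : Antitone lam')
    (hf : f ∈ compatibleBox q lam) (hf' : f ∈ compatibleBox q lam') : lam = lam' := by
  have hS (b : ℕ) : Monotone fun a => ∑ j ∈ Ico b a, q ^ j :=
    fun _ _ hab => sum_le_sum_of_subset (Ico_subset_Ico_right hab)
  have hmem {ν : Fin k → ℕ} (hν : Antitone ν) (hfν : f ∈ compatibleBox q ν) (i : Fin k) :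
      f i ∈ Set.Ico (∑ j ∈ Ico (nextPart ν i) (ν i), q ^ j)
        (∑ j ∈ Ico (nextPart ν i) (Order.succ (ν i)), q ^ j) := by
    rw [Order.succ_eq_add_one, sum_Ico_succ_top (nextPart_le hν i)]
    exact mem_compatibleBox.1 hfν i
  funext i
  induction i using WellFoundedGT.induction with
  | _ i ih =>
    have hnext : nextPart lam i = nextPart lam' i := by
      unfold nextPart
      split_ifs
      · exact ih _ (Fin.mk_lt_mk.2 (Nat.lt_succ_self _))
      · rfl
    by_contra hne
    have hi' := hmem h' hf' i
    rw [← hnext] at hi'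
    exact Set.disjoint_left.1 ((hS _).pairwise_disjoint_on_Ico_succ hne) (hmem h hf i) hi'

lemma pairwiseDisjoint_compatibleBox (m : ℕ) :
    (boxPartitions m k : Set (Fin k → ℕ)).PairwiseDisjoint (compatibleBox q) :=
  fun _ hlam _ hlam' hne => disjoint_left.2 fun _ hf hf' =>
    hne (eq_of_mem_compatibleBox (mem_boxPartitions.1 hlam).1 (mem_boxPartitions.1 hlam').1 hf hf')

lemma card_biUnion_compatibleBox (m : ℕ) :
    #((boxPartitions m k).biUnion (compatibleBox q)) = boxPartitionGF q m k := by
  rw [card_biUnion (pairwiseDisjoint_compatibleBox m)]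
  exact sum_congr rfl fun lam _ => card_compatibleBox lam

lemma coe_biUnion_compatibleBox (m : ℕ) :
    ↑((boxPartitions m k).biUnion (compatibleBox q)) =
      {f : Fin k → ℕ | ∃ lam : Fin k → ℕ, Antitone lam ∧ (∀ i, lam i ≤ m) ∧
        ∀ i, deltaStat q lam i ≤ f i ∧ f i < deltaStat q lam i + q ^ lam i} := by
  ext f
  simp [mem_boxPartitions, mem_compatibleBox, and_assoc]

end Compatible

/-- For an integer `q ≥ 2` and `0 ≤ k ≤ n`, the ordinary q-binomial coefficient
`[n choose k]_q = ∏_{i=1}^{k} (q^n - q^{i-1})/(q^k - q^{i-1})` equals the number of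
partitions `μ` (with parts in `{q^k - q^{k-i}}`, encoded by multiplicity functions `m`)
that are q-compatible with some partition `λ` fitting inside a `k × (n-k)` rectangle. -/
theorem qbinom_counts_compatible_partitions (q n k : ℕ) (hq : 2 ≤ q) (hk : k ≤ n) :
    (Set.ncard {m : Fin k → ℕ | ∃ lam : Fin k → ℕ, Antitone lam ∧ (∀ i, lam i ≤ n - k) ∧
        ∀ i, deltaStat q lam i ≤ m i ∧ m i < deltaStat q lam i + q ^ lam i} : ℚ)
      = ∏ i ∈ Finset.range k, (((q : ℚ) ^ n - (q : ℚ) ^ i) / ((q : ℚ) ^ k - (q : ℚ) ^ i)) := by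
  have hq₁ : (1 : ℚ) < q := by exact_mod_cast hq
  rw [← coe_biUnion_compatibleBox, Set.ncard_coe_finset, card_biUnion_compatibleBox,
    Nat.cast_boxPartitionGF, boxPartitionGF_eq_prod_div (by positivity)
      (fun j hj => (one_lt_pow₀ hq₁ hj.ne').ne'), Nat.sub_add_cancel hk]
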